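/- In Picaria, the Trap position is a win for O: let c be the configuration with c(0,0) = X, c(0,1) = O, c(1,0) = O, c(1,1) = X, c(2,0) = X, c(2,1) = O and all other cells empty. Then the state (c, X) with X to move is in WinningFor O. -/

import Mathlib

/-- The two players of Picaria. -/
inductive Player : Type
  | X : Player
  | O : Player
deriving DecidableEq

instance : Fintype Player :=
  ⟨{Player.X, Player.O}, fun p => by cases p <;> simp⟩

/-- The opponent of a player. -/
def Player.other : Player → Player
  | Player.X => Player.O
  | Player.O => Player.X

/-- A cell of the 3×3 board, written (row, column), 0-indexed. -/
abbrev Cell : Type := Fin 3 × Fin 3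

/-- A configuration assigns to each cell an optional stone. -/
abbrev Config : Type := Cell → Option Player

/-- King-move adjacency on the board: distinct cells whose coordinates
differ by at most 1 each. -/
def adjacent (a b : Cell) : Prop :=
  a ≠ b ∧ |((a.1 : ℕ) : ℤ) - ((b.1 : ℕ) : ℤ)| ≤ 1 ∧
    |((a.2 : ℕ) : ℤ) - ((b.2 : ℕ) : ℤ)| ≤ 1

/-- The 8 lines of the board: 3 rows, 3 columns, 2 main diagonals. -/
def lines : List (Cell × Cell × Cell) :=
  [((0,0),(0,1),(0,2)), ((1,0),(1,1),(1,2)), ((2,0),(2,1),(2,2)),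
   ((0,0),(1,0),(2,0)), ((0,1),(1,1),(2,1)), ((0,2),(1,2),(2,2)),
   ((0,0),(1,1),(2,2)), ((0,2),(1,1),(2,0))]

/-- Player `p` has three-in-a-row in configuration `c`. -/
def threeInARow (c : Config) (p : Player) : Prop :=
  ∃ l ∈ lines, c l.1 = some p ∧ c l.2.1 = some p ∧ c l.2.2 = some p

/-- The number of stones of player `p` on the board. -/
def stoneCount (c : Config) (p : Player) : ℕ :=
  (Finset.univ.filter fun x : Cell => c x = some p).card

/-- Legal moves of player `t` from configuration `c`, producing `c'`:
placement on an empty cell while `t` has fewer than 3 stones on the board;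
otherwise a slide of one of `t`'s stones to an adjacent empty cell. -/
def Move (t : Player) (c c' : Config) : Prop :=
  (stoneCount c t < 3 ∧ ∃ x : Cell, c x = none ∧ c' = Function.update c x (some t)) ∨
  (3 ≤ stoneCount c t ∧ ∃ x y : Cell, c x = some t ∧ c y = none ∧ adjacent x y ∧
    c' = Function.update (Function.update c x none) y (some t))

/-- `WinningFor p` is the least set of states (configuration, player to move) such that:
(i) `(c, p)` is winning for `p` if some legal move of `p` immediately makes a
three-in-a-row for `p`, or leads to a state winning for `p`;
(ii) `(c, q)` (for `q` the opponent of `p`) is winning for `p` if `q` has at least one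
legal move, and every legal move of `q` yields a configuration with no three-in-a-row
for `q` together with a state winning for `p`. -/
inductive WinningFor (p : Player) : Config × Player → Prop
  | moveWin (c c' : Config) (h : Move p c c') (hw : threeInARow c' p) :
      WinningFor p (c, p)
  | moveStep (c c' : Config) (h : Move p c c') (hw : WinningFor p (c', p.other)) :
      WinningFor p (c, p)
  | forced (c : Config) (hne : ∃ c', Move p.other c c')
      (hnowin : ∀ c', Move p.other c c' → ¬ threeInARow c' p.other)
      (hall : ∀ c', Move p.other c c' → WinningFor p (c', p)) :
      WinningFor p (c, p.other)
/-- The Trap position. -/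
def trap : Config := fun x =>
  if x = ((0 : Fin 3), (0 : Fin 3)) then some Player.X
  else if x = ((0 : Fin 3), (1 : Fin 3)) then some Player.O
  else if x = ((1 : Fin 3), (0 : Fin 3)) then some Player.O
  else if x = ((1 : Fin 3), (1 : Fin 3)) then some Player.X
  else if x = ((2 : Fin 3), (0 : Fin 3)) then some Player.X
  else if x = ((2 : Fin 3), (1 : Fin 3)) then some Player.O
  else none


instance (a b : Cell) : Decidable (adjacent a b) := by
  unfold adjacent; infer_instance

instance (c : Config) (p : Player) : Decidable (threeInARow c p) := by
  unfold threeInARow; infer_instance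

def slideTo (c : Config) (x y : Cell) (p : Player) : Config :=
  Function.update (Function.update c x none) y (some p)

def cfgA : Config := slideTo trap ((1:Fin 3),(1:Fin 3)) ((0:Fin 3),(2:Fin 3)) Player.X
def cfgB : Config := slideTo trap ((1:Fin 3),(1:Fin 3)) ((1:Fin 3),(2:Fin 3)) Player.X
def cfgC : Config := slideTo trap ((1:Fin 3),(1:Fin 3)) ((2:Fin 3),(2:Fin 3)) Player.X

lemma move_char (c' : Config) (h : Move Player.X trap c') :
    c' = cfgA ∨ c' = cfgB ∨ c' = cfgC := by
  rcases h with ⟨hlt, _⟩ | ⟨_, x, y, hx, hy, hadj, heq⟩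
  · exact absurd hlt (by decide)
  · subst heq
    fin_cases x <;> fin_cases y <;>
      first
        | (exfalso; revert hx; decide)
        | (exfalso; revert hy; decide)
        | (exfalso; revert hadj; decide)
        | (left; rfl)
        | (right; left; rfl)
        | (right; right; rfl)

/-- The Trap position, with X to move, is a win for O. -/
theorem picaria_trap_O_wins : WinningFor Player.O (trap, Player.X) := by
  apply WinningFor.forced
  · exact ⟨cfgB, Or.inr ⟨by decide, ((1:Fin 3),(1:Fin 3)), ((1:Fin 3),(2:Fin 3)),
      by decide, by decide, ⟨by decide, by decide, by decide⟩, rfl⟩⟩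
  · intro c' h
    rcases move_char c' h with rfl | rfl | rfl <;> decide
  · intro c' h
    rcases move_char c' h with rfl | rfl | rfl <;>
      exact WinningFor.moveWin _ _
        (Or.inr ⟨by decide, ((1:Fin 3),(0:Fin 3)), ((1:Fin 3),(1:Fin 3)),
          by decide, by decide, ⟨by decide, by decide, by decide⟩, rfl⟩)
        (by decide)
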